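/- arXiv:2306.03929 — 3 statements merged into one kernel-verified Lean document; each statement's English description precedes it below -/
import Mathlib

section
/- Let (S,d) be a metric space, A a nonempty finite set, C, K, L' ≥ 0 with R(·,a) C-Lipschitz for each a and transition maps F_a K-Lipschitz, let S† be a nonempty finite subset of S, V̂_next : S† → ℝ arbitrary, and define V̂(s) = max_{a∈A} { R(s,a) + min_{s† ∈ S†} [ V̂_next(s†) + L'·d(s†, F_a(s)) ] }. Then V̂ is Lipschitz continuous with constant C + L'·K. -/
/-! Each `R(·, a)` is `C`-Lipschitz, and the anchor-penalized minimum
`x ↦ min_{s†} (V̂_next s† + L' d(s†, x))` is `L'`-Lipschitz as a finite minimum of `L'`-Lipschitz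
functions; composing with the `K`-Lipschitz `F_a` makes the `a`-th term `(C + L' K)`-Lipschitz, and
a finite maximum of such functions is again `(C + L' K)`-Lipschitz. -/

namespace Finset

section

variable {ι α : Type*} [AddCommGroup α] [LinearOrder α] [IsOrderedAddMonoid α]
  {t : Finset ι} (ht : t.Nonempty) {f g : ι → α} {c : α}

theorem sup'_le_sup'_add (h : ∀ i ∈ t, f i ≤ g i + c) : t.sup' ht f ≤ t.sup' ht g + c :=
  sup'_le ht f fun i hi => (h i hi).trans (add_le_add_left (le_sup' g hi) c)

theorem inf'_le_inf'_add (h : ∀ i ∈ t, f i ≤ g i + c) : t.inf' ht f ≤ t.inf' ht g + c :=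
  sub_le_iff_le_add.1 <| le_inf' ht g fun i hi =>
    sub_le_iff_le_add.2 ((inf'_le f hi).trans (h i hi))

theorem abs_sup'_sub_sup'_le (h : ∀ i ∈ t, |f i - g i| ≤ c) : |t.sup' ht f - t.sup' ht g| ≤ c := by
  simp only [abs_sub_le_iff, sub_le_iff_le_add'] at h ⊢
  exact ⟨sup'_le_sup'_add ht fun i hi => (h i hi).1, sup'_le_sup'_add ht fun i hi => (h i hi).2⟩

theorem abs_inf'_sub_inf'_le (h : ∀ i ∈ t, |f i - g i| ≤ c) : |t.inf' ht f - t.inf' ht g| ≤ c := by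
  simp only [abs_sub_le_iff, sub_le_iff_le_add'] at h ⊢
  exact ⟨inf'_le_inf'_add ht fun i hi => (h i hi).1, inf'_le_inf'_add ht fun i hi => (h i hi).2⟩

end

theorem abs_inf'_add_mul_dist_sub_le {X : Type*} [PseudoMetricSpace X] (t : Finset X)
    (ht : t.Nonempty) (v : X → ℝ) {L : ℝ} (hL : 0 ≤ L) (x y : X) :
    |t.inf' ht (fun p => v p + L * dist p x) - t.inf' ht (fun p => v p + L * dist p y)|
      ≤ L * dist x y := by
  refine abs_inf'_sub_inf'_le ht fun p _ => ?_
  rw [add_sub_add_left_eq_sub, ← mul_sub, abs_mul, abs_of_nonneg hL, dist_comm p, dist_comm p]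
  exact mul_le_mul_of_nonneg_left (abs_dist_sub_le x y p) hL

end Finset

theorem stmt_8_general {S : Type*} [MetricSpace S] {A : Type*} [Fintype A] [Nonempty A]
    (Sd : Finset S) (hSd : Sd.Nonempty)
    (C K L' : ℝ) (hL' : 0 ≤ L')
    (R : S → A → ℝ) (F : A → S → S) (Vnext : S → ℝ) (Vhat : S → ℝ)
    (hR : ∀ a : A, ∀ s s' : S, |R s a - R s' a| ≤ C * dist s s')
    (hF : ∀ a : A, ∀ s s' : S, dist (F a s) (F a s') ≤ K * dist s s')
    (hVhat : ∀ s : S, Vhat s = Finset.univ.sup' Finset.univ_nonempty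
      (fun a : A => R s a + Sd.inf' hSd (fun sd => Vnext sd + L' * dist sd (F a s)))) :
    ∀ s s' : S, |Vhat s - Vhat s'| ≤ (C + L' * K) * dist s s' := by
  intro s s'
  rw [hVhat s, hVhat s']
  refine Finset.abs_sup'_sub_sup'_le _ fun a _ => ?_
  calc _ ≤ |R s a - R s' a| + |Sd.inf' hSd (fun sd => Vnext sd + L' * dist sd (F a s))
          - Sd.inf' hSd (fun sd => Vnext sd + L' * dist sd (F a s'))| := by
        rw [add_sub_add_comm]; exact abs_add_le _ _
    _ ≤ C * dist s s' + L' * (K * dist s s') :=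
        add_le_add (hR a s s') <| (Sd.abs_inf'_add_mul_dist_sub_le hSd Vnext hL' _ _).trans
          (mul_le_mul_of_nonneg_left (hF a s s') hL')
    _ = (C + L' * K) * dist s s' := by ring

theorem stmt_8 {S : Type*} [MetricSpace S] {A : Type*} [Fintype A] [Nonempty A]
    (Sd : Finset S) (hSd : Sd.Nonempty)
    (C K L' : ℝ) (hC : 0 ≤ C) (hK : 0 ≤ K) (hL' : 0 ≤ L')
    (R : S → A → ℝ) (F : A → S → S) (Vnext : S → ℝ) (Vhat : S → ℝ)
    (hR : ∀ a : A, ∀ s s' : S, |R s a - R s' a| ≤ C * dist s s')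
    (hF : ∀ a : A, ∀ s s' : S, dist (F a s) (F a s') ≤ K * dist s s')
    (hVhat : ∀ s : S, Vhat s = Finset.univ.sup' Finset.univ_nonempty
      (fun a : A => R s a + Sd.inf' hSd (fun sd => Vnext sd + L' * dist sd (F a s)))) :
    ∀ s s' : S, |Vhat s - Vhat s'| ≤ (C + L' * K) * dist s s' :=
  stmt_8_general Sd hSd C K L' hL' R F Vnext Vhat hR hF hVhat
end

section
/- Consider the deterministic MDP on state space ℝ² with two actions a_diff and a_null, horizon T = B+1, transitions s_{t+1} = (s_{t,1} - s_{t,2}, 0) + u_t under a_diff and s_{t+1} = (s_{t,1}, 0) + u_t under a_null, where the noise values are u_t = (v_{t+1}, v_{t+2}) for t ≤ T-3 and u_{T-2} = (v_{T-1}, 0), with initial state s'_0 = (0, v_1), for positive integers v_1,…,v_B. For any counterfactual action sequence (a'_0,…,a'_{T-1}), the resulting state sequence satisfies s'_{t,1} = Σ_{t' ∈ N'_{t-1}} v_{t'+1} for all t ∈ {1,…,T-1}, where N'_{t-1} = { t' ≤ t-1 : a'_{t'} = a_null }. -/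
/-- Actions: `true` encodes `a_null`, `false` encodes `a_diff`. -/
theorem stmt_10 (B : ℕ) (hB : 1 ≤ B) (T : ℕ) (hT : T = B + 1)
    (v : ℕ → ℤ) (hv : ∀ i, 1 ≤ v i)
    (a' : ℕ → Bool) (u : ℕ → ℝ × ℝ) (s : ℕ → ℝ × ℝ)
    (hu1 : ∀ t, t + 3 ≤ T → u t = ((v (t + 1) : ℝ), (v (t + 2) : ℝ)))
    (hu2 : u (T - 2) = ((v (T - 1) : ℝ), 0))
    (hs0 : s 0 = (0, (v 1 : ℝ)))
    (hstep : ∀ t, t < T - 1 →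
      s (t + 1) = if a' t = true
        then ((s t).1 + (u t).1, (u t).2)
        else ((s t).1 - (s t).2 + (u t).1, (u t).2)) :
    ∀ t, 1 ≤ t → t ≤ T - 1 →
      (s t).1 = ∑ t' ∈ (Finset.range t).filter (fun t' => a' t' = true),
        (v (t' + 1) : ℝ) := by
  subst hT
  have key : ∀ t, t ≤ B →
      ((s t).1 = ∑ t' ∈ (Finset.range t).filter (fun t' => a' t' = true),
        (v (t' + 1) : ℝ)) ∧ (t + 2 ≤ B + 1 → (s t).2 = (v (t + 1) : ℝ)) := by
    intro t
    induction t with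
    | zero => intro _; simp [hs0]
    | succ t ih =>
      intro ht
      obtain ⟨ih1, ih2⟩ := ih (by omega)
      have hs2 : (s t).2 = (v (t + 1) : ℝ) := ih2 (by omega)
      have hu : (u t).1 = (v (t + 1) : ℝ) := by
        by_cases h : t + 3 ≤ B + 1
        · rw [hu1 t h]
        · have hTt : B + 1 - 2 = t := by omega
          have hTv : B + 1 - 1 = t + 1 := by omega
          have h2 := hu2
          rw [hTt, hTv] at h2
          rw [h2]
      have hstep' := hstep t (by omega)
      constructor
      · rw [Finset.range_add_one, Finset.filter_insert]
        by_cases ha : a' t = true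
        · rw [if_pos ha, Finset.sum_insert (by simp)]
          rw [hstep', if_pos ha]
          simp only [ih1, hu]
          ring
        · rw [if_neg ha, hstep', if_neg ha]
          simp only [ih1, hs2, hu]
          ring
      · intro h
        have hu3 : (u t).2 = (v (t + 2) : ℝ) := by rw [hu1 t (by omega)]
        rw [hstep']
        split <;> simp [hu3]
  intro t _ h2
  exact (key t (by omega)).1
end

section
/- Let U and S be real random variables and g, h : ℝ → ℝ be strictly increasing continuous bijections, and let Ũ be a random variable with P(Ũ ≤ h⁻¹(x)) = P(U ≤ g⁻¹(x)) for all x, so that g(U) and h(Ũ) have the same distribution. If u, ũ satisfy F_U(u) = F_Ũ(ũ) and the common distribution function of g(U) and h(Ũ) is strictly increasing, then g(u) = h(ũ). -/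
open MeasureTheory Set

theorem stmt_13 (μ ν : Measure ℝ) [IsProbabilityMeasure μ] [IsProbabilityMeasure ν]
    (g h : ℝ → ℝ)
    (hg : StrictMono g) (hgc : Continuous g) (hgb : Function.Bijective g)
    (hh : StrictMono h) (hhc : Continuous h) (hhb : Function.Bijective h)
    -- g(U) and h(Ũ) are equal in distribution (via CDFs)
    (hdist : ∀ x : ℝ, μ {t | g t ≤ x} = ν {t | h t ≤ x})
    -- the common CDF of g(U) is strictly increasing
    (hstrict : StrictMono (fun x : ℝ => μ {t | g t ≤ x}))
    (u utilde : ℝ)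
    -- u and ũ are at the same quantile level: F_U(u) = F_Ũ(ũ)
    (hq : μ (Iic u) = ν (Iic utilde)) :
    g u = h utilde := by
  have h1 : {t | g t ≤ g u} = Iic u := by
    ext t; simp [hg.le_iff_le]
  have h2 : {t : ℝ | h t ≤ h utilde} = Iic utilde := by
    ext t; simp [hh.le_iff_le]
  have : μ {t | g t ≤ g u} = μ {t | g t ≤ h utilde} := by
    rw [h1, hq, ← h2, ← hdist]
  exact hstrict.injective this
end
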